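/- The iterates x̂^{(ℓ)} of the modified coupled recursion satisfy, for every ℓ ≥ 0: (1) x̂^{(ℓ+1)} ⪯ x̂^{(ℓ)} componentwise; (2) x̂^{(ℓ)} ⪰ x^{(ℓ)} componentwise, where x^{(ℓ)} are the iterates of the coupled recursion; and (3) x̂^{(ℓ)} is componentwise non-decreasing in the spatial index, i.e. x̂_{i+1}^{(ℓ)} ≥ x̂_i^{(ℓ)} for all i ∈ [1:M−1]. -/

import Mathlib

/-!
The vector `h(x)` is the transposed average `Aᵀ z` of `z = f(A g(x))`, so `h(x)_i` is the mean
of `z` over the window `[i - w + 1, i]` and `(A g(x))_j` the mean of `g(x)` over `[j, j + w - 1]`.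
Both `h` and `q` are monotone for the componentwise order, and `h` commutes with the reversal
`i ↦ M + 1 - i`, so the iterates `x^{(ℓ)}` stay symmetric. If `x` is non-decreasing, then so is
`A g(x)`, and sliding the window one step to the right adds a value of `z` at least as large as
the one it drops, as long as the window has not passed the middle `i₀`; hence `h(x)` is
non-decreasing up to `i₀`, and `q` turns it into a non-decreasing profile. Such a profile
dominates every symmetric profile lying below `h(x̂)`, which gives `x^{(ℓ)} ⪯ x̂^{(ℓ)}` by
induction, and `x̂^{(1)} ⪯ x̂^{(0)} = x_max·1` propagates by monotonicity.
-/

open Set Filter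

/-- The coupling matrix `A` of size `N × M` with `M = N + w − 1`. -/
noncomputable def Amat (w N : ℕ) (j : Fin N) (k : Fin (N + w - 1)) : ℝ :=
  if (j : ℕ) ≤ (k : ℕ) ∧ (k : ℕ) < (j : ℕ) + w then (w : ℝ)⁻¹ else 0

/-- The coupled update `h(x) = Aᵀ f(A g(x))`. -/
noncomputable def coupledMap (w N : ℕ) (f g : ℝ → ℝ)
    (x : Fin (N + w - 1) → ℝ) : Fin (N + w - 1) → ℝ :=
  fun i => ∑ j : Fin N, Amat w N j i * f (∑ k, Amat w N j k * g (x k))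

/-- The coupled recursion initialized at `x_max·1`. -/
noncomputable def coupledSeq (w N : ℕ) (f g : ℝ → ℝ) (xmax : ℝ) :
    ℕ → Fin (N + w - 1) → ℝ
  | 0 => fun _ => xmax
  | ℓ + 1 => coupledMap w N f g (coupledSeq w N f g xmax ℓ)

/-- The saturation map `q`: positions (1-indexed) beyond `i₀ = ⌈M/2⌉` are replaced
by the value at position `i₀` (0-indexed `(M+1)/2 − 1`). -/
noncomputable def qmap (M : ℕ) (x : Fin M → ℝ) : Fin M → ℝ :=
  fun i => if _h : (M + 1) / 2 ≤ (i : ℕ)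
    then x ⟨(M + 1) / 2 - 1, by have := i.isLt; omega⟩ else x i

/-- The modified coupled recursion `x̂^{(ℓ+1)} = q(h(x̂^{(ℓ)}))` initialized at
`x_max·1`. -/
noncomputable def modSeq (w N : ℕ) (f g : ℝ → ℝ) (xmax : ℝ) :
    ℕ → Fin (N + w - 1) → ℝ
  | 0 => fun _ => xmax
  | ℓ + 1 => qmap _ (coupledMap w N f g (modSeq w N f g xmax ℓ))

open Matrix

lemma mem_Icc_const_iff {ι : Type*} {v : ι → ℝ} {a : ℝ} :
    v ∈ Icc 0 (fun _ => a) ↔ ∀ i, v i ∈ Icc 0 a := by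
  simp [Pi.le_def, forall_and]

lemma MonotoneOn.comp_monotone {α β γ : Type*} [Preorder α] [Preorder β] [Preorder γ]
    {s : Set β} {g : β → γ} {v : α → β} (hg : MonotoneOn g s) (hv : Monotone v)
    (hvs : ∀ i, v i ∈ s) : Monotone (g ∘ v) :=
  fun _ _ hab => hg (hvs _) (hvs _) (hv hab)

lemma Matrix.mulVec_mono_of_nonneg {m n : Type*} [Fintype n] {A : Matrix m n ℝ}
    (hA : ∀ i j, 0 ≤ A i j) : Monotone (A *ᵥ ·) :=
  fun _ _ h i => dotProduct_le_dotProduct_of_nonneg_left h (hA i)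

lemma Matrix.mulVec_comp_rev {m n : ℕ} {A : Matrix (Fin m) (Fin n) ℝ}
    (hA : A.submatrix Fin.rev Fin.rev = A) (v : Fin n → ℝ) :
    A *ᵥ (v ∘ Fin.rev) = (A *ᵥ v) ∘ Fin.rev := by
  calc A *ᵥ (v ∘ Fin.rev) = A.submatrix Fin.rev Fin.revPerm *ᵥ (v ∘ Fin.rev) := by
        rw [show A.submatrix Fin.rev Fin.revPerm = A from hA]
    _ = (A *ᵥ v) ∘ Fin.rev := by
        rw [submatrix_mulVec_equiv]
        simp [Function.comp_def]

def extendByZero {n : ℕ} (v : Fin n → ℝ) (m : ℕ) : ℝ :=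
  if h : m < n then v ⟨m, h⟩ else 0

section extendByZero

variable {n : ℕ} {v : Fin n → ℝ}

@[simp]
lemma extendByZero_coe (v : Fin n → ℝ) (k : Fin n) : extendByZero v k = v k :=
  dif_pos k.isLt

lemma extendByZero_mem_Icc {c : ℝ} (hv : v ∈ Icc 0 (fun _ => c)) (hc : 0 ≤ c) (m : ℕ) :
    extendByZero v m ∈ Icc 0 c := by
  unfold extendByZero
  split_ifs
  exacts [mem_Icc_const_iff.1 hv _, ⟨le_rfl, hc⟩]

lemma extendByZero_nonneg (hv : 0 ≤ v) (m : ℕ) : 0 ≤ extendByZero v m := by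
  unfold extendByZero
  split_ifs
  exacts [hv _, le_rfl]

lemma Monotone.monotoneOn_extendByZero (hv : Monotone v) :
    MonotoneOn (extendByZero v) (Iio n) := fun a ha b hb hab => by
  simpa [extendByZero, show a < n from ha, show b < n from hb] using hv (Fin.mk_le_mk.2 hab)

lemma sum_ite_mul_eq_sum_Ico (v : Fin n → ℝ) (a b : ℕ) (c : ℝ) :
    ∑ k : Fin n, (if a ≤ (k : ℕ) ∧ (k : ℕ) < b then c else 0) * v k
      = c * ∑ k ∈ Finset.Ico a b, extendByZero v k := by
  have hvanish : ∀ k ∈ Finset.Ico a b, k ∉ Finset.range n ∩ Finset.Ico a b →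
      c * extendByZero v k = 0 := fun k hk hk' => by
    simp_all [extendByZero]
  rw [Finset.mul_sum, ← Finset.sum_subset Finset.inter_subset_right hvanish,
    ← Finset.sum_ite_mem, ← Fin.sum_univ_eq_sum_range]
  simp [ite_mul]

end extendByZero

lemma sum_Ico_le_sum_Ico_of_monotoneOn {z : ℕ → ℝ} {n a b w : ℕ} (hz : MonotoneOn z (Iio n))
    (hab : a ≤ b) (hb : b + w ≤ n) :
    ∑ k ∈ Finset.Ico a (a + w), z k ≤ ∑ k ∈ Finset.Ico b (b + w), z k := by
  rw [Finset.sum_Ico_eq_sum_range, Finset.sum_Ico_eq_sum_range, add_tsub_cancel_left,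
    add_tsub_cancel_left]
  gcongr with t ht
  rw [Finset.mem_range] at ht
  exact hz (show a + t < n by omega) (show b + t < n by omega) (by omega)

lemma sum_Ico_sub_le_sum_Ico_succ_sub {z : ℕ → ℝ} {n w i : ℕ} (hz₀ : ∀ k, 0 ≤ z k)
    (hz : MonotoneOn z (Iio n)) (hi : i + 1 < n ∨ i + 1 < w) :
    ∑ k ∈ Finset.Ico (i + 1 - w) (i + 1), z k
      ≤ ∑ k ∈ Finset.Ico (i + 1 + 1 - w) (i + 1 + 1), z k := by
  rcases le_or_gt w (i + 1) with hw | hw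
  · convert sum_Ico_le_sum_Ico_of_monotoneOn hz (a := i + 1 - w) (b := i + 1 + 1 - w) (w := w)
      (by omega) (by omega) using 3 <;> omega
  · rw [show i + 1 - w = 0 by omega, show i + 1 + 1 - w = 0 by omega]
    exact Finset.sum_le_sum_of_subset_of_nonneg (Finset.Ico_subset_Ico le_rfl (by omega))
      fun k _ _ => hz₀ k

lemma inv_mul_sum_mem_Icc {s : Finset ℕ} {z : ℕ → ℝ} {w : ℕ} {c : ℝ} (hs : s.card ≤ w)
    (hc : 0 ≤ c) (hz : ∀ k, z k ∈ Icc 0 c) : (w : ℝ)⁻¹ * ∑ k ∈ s, z k ∈ Icc 0 c := by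
  refine ⟨mul_nonneg (by positivity) (Finset.sum_nonneg fun k _ => (hz k).1), ?_⟩
  rcases eq_or_ne (w : ℝ) 0 with hw | hw
  · simpa [hw] using hc
  calc (w : ℝ)⁻¹ * ∑ k ∈ s, z k ≤ (w : ℝ)⁻¹ * (w * c) := by
        gcongr
        calc ∑ k ∈ s, z k ≤ s.card • c := Finset.sum_le_card_nsmul _ _ _ fun k _ => (hz k).2
          _ ≤ w * c := by rw [nsmul_eq_mul]; gcongr
    _ = c := inv_mul_cancel_left₀ hw c

def leftHalf (M : ℕ) : Set (Fin M) := {i | (i : ℕ) < (M + 1) / 2}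

noncomputable def couplingMatrix (w N : ℕ) : Matrix (Fin N) (Fin (N + w - 1)) ℝ :=
  Matrix.of (Amat w N)

section couplingMatrix

variable {w N : ℕ}

lemma coupledMap_eq_mulVec (f g : ℝ → ℝ) (x : Fin (N + w - 1) → ℝ) :
    coupledMap w N f g x
      = (couplingMatrix w N)ᵀ *ᵥ (f ∘ (couplingMatrix w N *ᵥ (g ∘ x))) :=
  rfl

lemma couplingMatrix_nonneg (j : Fin N) (k : Fin (N + w - 1)) : 0 ≤ couplingMatrix w N j k := by
  simp only [couplingMatrix, of_apply, Amat]
  split_ifs <;> positivity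

lemma couplingMatrix_submatrix_rev :
    (couplingMatrix w N).submatrix Fin.rev Fin.rev = couplingMatrix w N := by
  ext j k
  simp only [couplingMatrix, submatrix_apply, of_apply, Amat, Fin.val_rev]
  have := j.isLt
  have := k.isLt
  congr 1
  apply propext
  omega

lemma couplingMatrix_mulVec_apply (v : Fin (N + w - 1) → ℝ) (j : Fin N) :
    (couplingMatrix w N *ᵥ v) j = (w : ℝ)⁻¹ * ∑ k ∈ Finset.Ico (j : ℕ) (j + w), extendByZero v k :=
  sum_ite_mul_eq_sum_Ico v _ _ _

-- The truncated subtraction `i + 1 - w` clips the window at the left boundary.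
lemma couplingMatrix_transpose_mulVec_apply (u : Fin N → ℝ) (i : Fin (N + w - 1)) :
    ((couplingMatrix w N)ᵀ *ᵥ u) i
      = (w : ℝ)⁻¹ * ∑ j ∈ Finset.Ico ((i : ℕ) + 1 - w) (i + 1), extendByZero u j := by
  rw [← sum_ite_mul_eq_sum_Ico, mulVec, dotProduct]
  refine Finset.sum_congr rfl fun j _ => ?_
  simp only [transpose_apply, couplingMatrix, of_apply, Amat]
  congr 2
  apply propext
  omega

lemma couplingMatrix_mulVec_mem_Icc {c : ℝ} (hc : 0 ≤ c) {v : Fin (N + w - 1) → ℝ}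
    (hv : v ∈ Icc 0 (fun _ => c)) : couplingMatrix w N *ᵥ v ∈ Icc 0 (fun _ => c) := by
  refine mem_Icc_const_iff.2 fun j => ?_
  rw [couplingMatrix_mulVec_apply]
  exact inv_mul_sum_mem_Icc (by simp) hc (extendByZero_mem_Icc hv hc)

lemma couplingMatrix_transpose_mulVec_mem_Icc {c : ℝ} (hc : 0 ≤ c) {u : Fin N → ℝ}
    (hu : u ∈ Icc 0 (fun _ => c)) : (couplingMatrix w N)ᵀ *ᵥ u ∈ Icc 0 (fun _ => c) := by
  refine mem_Icc_const_iff.2 fun i => ?_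
  rw [couplingMatrix_transpose_mulVec_apply]
  exact inv_mul_sum_mem_Icc (by simp; omega) hc (extendByZero_mem_Icc hu hc)

lemma Monotone.couplingMatrix_mulVec {v : Fin (N + w - 1) → ℝ} (hv : Monotone v) :
    Monotone (couplingMatrix w N *ᵥ v) := fun a b hab => by
  rw [couplingMatrix_mulVec_apply, couplingMatrix_mulVec_apply]
  gcongr 1
  exact sum_Ico_le_sum_Ico_of_monotoneOn hv.monotoneOn_extendByZero hab (by omega)

lemma Monotone.monotoneOn_couplingMatrix_transpose_mulVec {u : Fin N → ℝ} (hu₀ : 0 ≤ u)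
    (hu : Monotone u) :
    MonotoneOn ((couplingMatrix w N)ᵀ *ᵥ u) (leftHalf (N + w - 1)) := by
  have hwindow : MonotoneOn
      (fun i : ℕ => ∑ j ∈ Finset.Ico (i + 1 - w) (i + 1), extendByZero u j)
      (Iio ((N + w - 1 + 1) / 2)) := by
    refine monotoneOn_of_le_succ ordConnected_Iio fun i _ _ hi => ?_
    rw [Order.succ_eq_add_one] at hi ⊢
    exact sum_Ico_sub_le_sum_Ico_succ_sub (extendByZero_nonneg hu₀) hu.monotoneOn_extendByZero
      (by simp only [mem_Iio] at hi; omega)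
  intro a ha b hb hab
  rw [couplingMatrix_transpose_mulVec_apply, couplingMatrix_transpose_mulVec_apply]
  gcongr 1
  exact hwindow ha hb hab

end couplingMatrix

section qmap

variable {M : ℕ} {y : Fin M → ℝ}

lemma qmap_mono : Monotone (qmap M) := fun y y' h i => by
  unfold qmap
  split_ifs <;> exact h _

lemma qmap_mem_Icc {c : ℝ} (hy : y ∈ Icc 0 (fun _ => c)) : qmap M y ∈ Icc 0 (fun _ => c) :=
  mem_Icc_const_iff.2 fun i => by
    unfold qmap
    split_ifs <;> exact mem_Icc_const_iff.1 hy _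

lemma monotone_qmap (hy : MonotoneOn y (leftHalf M)) : Monotone (qmap M y) := by
  intro a b hab
  rw [Fin.le_def] at hab
  unfold qmap
  split_ifs with ha hb hb
  · rfl
  · omega
  · exact hy (show (a : ℕ) < (M + 1) / 2 by omega) (show (M + 1) / 2 - 1 < (M + 1) / 2 by omega)
      (show (a : ℕ) ≤ (M + 1) / 2 - 1 by omega)
  · exact hy (show (a : ℕ) < (M + 1) / 2 by omega) (show (b : ℕ) < (M + 1) / 2 by omega) hab

lemma le_qmap_of_comp_rev {u : Fin M → ℝ} (hu : u ∘ Fin.rev = u) (huy : u ≤ y)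
    (hy : MonotoneOn y (leftHalf M)) : u ≤ qmap M y := by
  intro i
  unfold qmap
  split_ifs with hi
  · have := Fin.val_rev i
    calc u i = u i.rev := (congrFun hu i).symm
      _ ≤ y i.rev := huy _
      _ ≤ _ := hy (show (i.rev : ℕ) < (M + 1) / 2 by omega)
          (show (M + 1) / 2 - 1 < (M + 1) / 2 by omega) (show (i.rev : ℕ) ≤ (M + 1) / 2 - 1 by omega)
  · exact huy i

end qmap

section coupledMap

variable {xmax ymax : ℝ} {f g : ℝ → ℝ} {w N : ℕ}

lemma coupledMap_mapsTo (hxmax : 0 ≤ xmax) (hymax : 0 ≤ ymax)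
    (hf_maps : MapsTo f (Icc 0 ymax) (Icc 0 xmax)) (hg_maps : MapsTo g (Icc 0 xmax) (Icc 0 ymax)) :
    MapsTo (coupledMap w N f g) (Icc 0 fun _ => xmax) (Icc 0 fun _ => xmax) := fun x hx => by
  have hAg := couplingMatrix_mulVec_mem_Icc (w := w) (N := N) hymax
    (mem_Icc_const_iff.2 fun k => hg_maps (mem_Icc_const_iff.1 hx k))
  rw [coupledMap_eq_mulVec]
  exact couplingMatrix_transpose_mulVec_mem_Icc hxmax
    (mem_Icc_const_iff.2 fun j => hf_maps (mem_Icc_const_iff.1 hAg j))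

lemma coupledMap_monotoneOn (hymax : 0 ≤ ymax) (hf_mono : MonotoneOn f (Icc 0 ymax))
    (hg_maps : MapsTo g (Icc 0 xmax) (Icc 0 ymax)) (hg_mono : MonotoneOn g (Icc 0 xmax)) :
    MonotoneOn (coupledMap w N f g) (Icc 0 fun _ => xmax) := fun x hx x' hx' hle => by
  have hAg {x : Fin (N + w - 1) → ℝ} (hx : x ∈ Icc 0 fun _ => xmax) (j : Fin N) :=
    mem_Icc_const_iff.1 (couplingMatrix_mulVec_mem_Icc hymax
      (mem_Icc_const_iff.2 fun k => hg_maps (mem_Icc_const_iff.1 hx k))) j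
  have hgx : g ∘ x ≤ g ∘ x' := fun k =>
    hg_mono (mem_Icc_const_iff.1 hx k) (mem_Icc_const_iff.1 hx' k) (hle k)
  rw [coupledMap_eq_mulVec, coupledMap_eq_mulVec]
  refine mulVec_mono_of_nonneg (fun i j => couplingMatrix_nonneg j i) fun j => ?_
  exact hf_mono (hAg hx j) (hAg hx' j) (mulVec_mono_of_nonneg couplingMatrix_nonneg hgx j)

lemma coupledMap_comp_rev (x : Fin (N + w - 1) → ℝ) :
    coupledMap w N f g (x ∘ Fin.rev) = coupledMap w N f g x ∘ Fin.rev := by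
  have hAT : (couplingMatrix w N)ᵀ.submatrix Fin.rev Fin.rev = (couplingMatrix w N)ᵀ := by
    rw [← transpose_submatrix, couplingMatrix_submatrix_rev]
  rw [coupledMap_eq_mulVec, coupledMap_eq_mulVec, ← Function.comp_assoc,
    mulVec_comp_rev couplingMatrix_submatrix_rev, ← Function.comp_assoc, mulVec_comp_rev hAT]

lemma coupledMap_monotoneOn_leftHalf (hymax : 0 ≤ ymax)
    (hf_maps : MapsTo f (Icc 0 ymax) (Icc 0 xmax)) (hf_mono : MonotoneOn f (Icc 0 ymax))
    (hg_maps : MapsTo g (Icc 0 xmax) (Icc 0 ymax)) (hg_mono : MonotoneOn g (Icc 0 xmax))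
    {x : Fin (N + w - 1) → ℝ} (hx : x ∈ Icc 0 fun _ => xmax) (hx_mono : Monotone x) :
    MonotoneOn (coupledMap w N f g x) (leftHalf (N + w - 1)) := by
  have hAg := mem_Icc_const_iff.1 (couplingMatrix_mulVec_mem_Icc (w := w) (N := N) hymax
    (mem_Icc_const_iff.2 fun k => hg_maps (mem_Icc_const_iff.1 hx k)))
  have hAg_mono := (hg_mono.comp_monotone hx_mono (mem_Icc_const_iff.1 hx)).couplingMatrix_mulVec
  rw [coupledMap_eq_mulVec]
  exact (hf_mono.comp_monotone hAg_mono hAg).monotoneOn_couplingMatrix_transpose_mulVec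
    fun j => (hf_maps (hAg j)).1

end coupledMap

section sequences

variable {xmax ymax : ℝ} {f g : ℝ → ℝ} {w N : ℕ}

lemma coupledSeq_comp_rev (ℓ : ℕ) :
    coupledSeq w N f g xmax ℓ ∘ Fin.rev = coupledSeq w N f g xmax ℓ := by
  induction ℓ with
  | zero => rfl
  | succ ℓ ih => rw [coupledSeq, ← coupledMap_comp_rev, ih]

lemma coupledSeq_mem_Icc (hxmax : 0 ≤ xmax) (hymax : 0 ≤ ymax)
    (hf_maps : MapsTo f (Icc 0 ymax) (Icc 0 xmax)) (hg_maps : MapsTo g (Icc 0 xmax) (Icc 0 ymax))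
    (ℓ : ℕ) : coupledSeq w N f g xmax ℓ ∈ Icc 0 fun _ => xmax := by
  induction ℓ with
  | zero => exact ⟨fun _ => hxmax, le_rfl⟩
  | succ ℓ ih => exact coupledMap_mapsTo hxmax hymax hf_maps hg_maps ih

lemma modSeq_mem_Icc (hxmax : 0 ≤ xmax) (hymax : 0 ≤ ymax)
    (hf_maps : MapsTo f (Icc 0 ymax) (Icc 0 xmax)) (hg_maps : MapsTo g (Icc 0 xmax) (Icc 0 ymax))
    (ℓ : ℕ) : modSeq w N f g xmax ℓ ∈ Icc 0 fun _ => xmax := by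
  induction ℓ with
  | zero => exact ⟨fun _ => hxmax, le_rfl⟩
  | succ ℓ ih => exact qmap_mem_Icc (coupledMap_mapsTo hxmax hymax hf_maps hg_maps ih)

lemma monotone_modSeq (hxmax : 0 ≤ xmax) (hymax : 0 ≤ ymax)
    (hf_maps : MapsTo f (Icc 0 ymax) (Icc 0 xmax)) (hf_mono : MonotoneOn f (Icc 0 ymax))
    (hg_maps : MapsTo g (Icc 0 xmax) (Icc 0 ymax)) (hg_mono : MonotoneOn g (Icc 0 xmax)) (ℓ : ℕ) :
    Monotone (modSeq w N f g xmax ℓ) := by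
  induction ℓ with
  | zero => exact monotone_const
  | succ ℓ ih =>
    exact monotone_qmap (coupledMap_monotoneOn_leftHalf hymax hf_maps hf_mono hg_maps hg_mono
      (modSeq_mem_Icc hxmax hymax hf_maps hg_maps ℓ) ih)

lemma coupledSeq_le_modSeq (hxmax : 0 ≤ xmax) (hymax : 0 ≤ ymax)
    (hf_maps : MapsTo f (Icc 0 ymax) (Icc 0 xmax)) (hf_mono : MonotoneOn f (Icc 0 ymax))
    (hg_maps : MapsTo g (Icc 0 xmax) (Icc 0 ymax)) (hg_mono : MonotoneOn g (Icc 0 xmax)) (ℓ : ℕ) :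
    coupledSeq w N f g xmax ℓ ≤ modSeq w N f g xmax ℓ := by
  induction ℓ with
  | zero => exact le_rfl
  | succ ℓ ih =>
    exact le_qmap_of_comp_rev (coupledSeq_comp_rev (ℓ + 1))
      (coupledMap_monotoneOn hymax hf_mono hg_maps hg_mono
        (coupledSeq_mem_Icc hxmax hymax hf_maps hg_maps ℓ)
        (modSeq_mem_Icc hxmax hymax hf_maps hg_maps ℓ) ih)
      (coupledMap_monotoneOn_leftHalf hymax hf_maps hf_mono hg_maps hg_mono
        (modSeq_mem_Icc hxmax hymax hf_maps hg_maps ℓ)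
        (monotone_modSeq hxmax hymax hf_maps hf_mono hg_maps hg_mono ℓ))

lemma modSeq_succ_le (hxmax : 0 ≤ xmax) (hymax : 0 ≤ ymax)
    (hf_maps : MapsTo f (Icc 0 ymax) (Icc 0 xmax)) (hf_mono : MonotoneOn f (Icc 0 ymax))
    (hg_maps : MapsTo g (Icc 0 xmax) (Icc 0 ymax)) (hg_mono : MonotoneOn g (Icc 0 xmax)) (ℓ : ℕ) :
    modSeq w N f g xmax (ℓ + 1) ≤ modSeq w N f g xmax ℓ := by
  induction ℓ with
  | zero => exact (modSeq_mem_Icc hxmax hymax hf_maps hg_maps 1).2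
  | succ ℓ ih =>
    exact qmap_mono (coupledMap_monotoneOn hymax hf_mono hg_maps hg_mono
      (modSeq_mem_Icc hxmax hymax hf_maps hg_maps (ℓ + 1))
      (modSeq_mem_Icc hxmax hymax hf_maps hg_maps ℓ) ih)

end sequences

/-- **Lemma (mod_coupled_scalar_dec_inc).** The modified coupled recursion satisfies:
(i) `x̂^{(ℓ+1)} ⪯ x̂^{(ℓ)}`; (ii) `x̂^{(ℓ)} ⪰ x^{(ℓ)}`; and (iii) each `x̂^{(ℓ)}`
is non-decreasing in the spatial index. -/
theorem stmt_8
    (xmax ymax : ℝ) (hxmax : 0 < xmax) (hymax : 0 < ymax)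
    (f g : ℝ → ℝ)
    (hf_maps : Set.MapsTo f (Set.Icc 0 ymax) (Set.Icc 0 xmax))
    (hf_mono : MonotoneOn f (Set.Icc 0 ymax))
    (hg_maps : Set.MapsTo g (Set.Icc 0 xmax) (Set.Icc 0 ymax))
    (hg_strict : StrictMonoOn g (Set.Icc 0 xmax))
    (w N : ℕ) :
    (∀ ℓ : ℕ, ∀ i, modSeq w N f g xmax (ℓ + 1) i ≤ modSeq w N f g xmax ℓ i)
    ∧ (∀ ℓ : ℕ, ∀ i, coupledSeq w N f g xmax ℓ i ≤ modSeq w N f g xmax ℓ i)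
    ∧ (∀ ℓ : ℕ, ∀ i : ℕ, ∀ (h1 : i + 1 < N + w - 1),
        modSeq w N f g xmax ℓ ⟨i, by omega⟩ ≤ modSeq w N f g xmax ℓ ⟨i + 1, h1⟩) := by
  have hg_mono := hg_strict.monotoneOn
  refine ⟨fun ℓ => ?_, fun ℓ => ?_, fun ℓ i _ => ?_⟩
  · exact modSeq_succ_le hxmax.le hymax.le hf_maps hf_mono hg_maps hg_mono ℓ
  · exact coupledSeq_le_modSeq hxmax.le hymax.le hf_maps hf_mono hg_maps hg_mono ℓ
  · exact monotone_modSeq hxmax.le hymax.le hf_maps hf_mono hg_maps hg_mono ℓ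
      (Fin.mk_le_mk.2 i.le_succ)
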